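/- arXiv:math/0108182 — 3 statements merged into one kernel-verified Lean document; each statement's English description precedes it below -/
import Mathlib

section
/- Error decay for the approximate special Lagrangian: there is a constant C, independent of δ ∈ (0,1), such that ∫_{A_δ} ((x β_x + y β_y)·δ²/(2(x²+y²)))² · (1 + δ⁴/(4(x²+y²)²)) dx dy ≤ C·δ²/(log√δ)², where β(x,y) = log(√(x²+y²)/√δ)/log(√δ) and A_δ = {δ² ≤ x²+y² ≤ δ}. -/
open MeasureTheory

/-- The annulus A_δ = {(x,y) : δ² ≤ x² + y² ≤ δ} in ℝ². -/
def annulus (δ : ℝ) : Set (ℝ × ℝ) :=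
  {p : ℝ × ℝ | δ ^ 2 ≤ p.1 ^ 2 + p.2 ^ 2 ∧ p.1 ^ 2 + p.2 ^ 2 ≤ δ}

/-- The cutoff function β(x,y) = log(√(x²+y²)/√δ)/log(√δ). -/
noncomputable def cutoff (δ : ℝ) (p : ℝ × ℝ) : ℝ :=
  Real.log (Real.sqrt (p.1 ^ 2 + p.2 ^ 2) / Real.sqrt δ) / Real.log (Real.sqrt δ)

/-!
By Euler's identity `x β_x + y β_y = 1 / log √δ`, the integrand is a function of `u = x² + y²`
alone, and in that variable the area element is `π du`. On `[δ², δ]` the factor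
`1 + δ⁴ / (4u²)` is at most `5/4`, so the integral is at most
`(5π/16) (δ⁴ / log² √δ) ∫_{δ²}^{δ} u⁻² du ≤ (5π/16) δ² / log² √δ`.
-/

open Set Real Filter Topology

theorem integral_comp_sq_add_sq (f : ℝ → ℝ) :
    ∫ p : ℝ × ℝ, f (p.1 ^ 2 + p.2 ^ 2) = π * ∫ u in Ioi 0, f u := by
  have h_polar : EqOn
      (fun z : ℝ × ℝ => z.1 • f ((polarCoord.symm z).1 ^ 2 + (polarCoord.symm z).2 ^ 2))
      (fun z => z.1 * f (z.1 ^ 2) * 1) polarCoord.target := by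
    rintro ⟨r, θ⟩ -
    simp only [polarCoord_symm_apply, smul_eq_mul, mul_one, mul_pow, ← mul_add, cos_sq_add_sin_sq]
  have h_subst : ∫ r in Ioi (0 : ℝ), 2 * (r * f (r ^ 2)) = ∫ u in Ioi 0, f u := by
    rw [← integral_comp_rpow_Ioi f two_ne_zero]
    refine setIntegral_congr_fun measurableSet_Ioi fun r _ => ?_
    norm_num [smul_eq_mul, mul_assoc]
  rw [← integral_comp_polarCoord_symm,
    setIntegral_congr_fun polarCoord.open_target.measurableSet h_polar, polarCoord_target,
    Measure.volume_eq_prod, setIntegral_prod_mul (fun r => r * f (r ^ 2)) (fun _ => (1 : ℝ)),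
    setIntegral_const, measureReal_def, volume_Ioo, ← h_subst, integral_const_mul,
    ENNReal.toReal_ofReal (by linarith [pi_pos]), smul_eq_mul]
  ring

theorem setIntegral_preimage_sq_add_sq (f : ℝ → ℝ) {s : Set ℝ} (hs : MeasurableSet s) :
    ∫ p in (fun p : ℝ × ℝ => p.1 ^ 2 + p.2 ^ 2) ⁻¹' s, f (p.1 ^ 2 + p.2 ^ 2) =
      π * ∫ u in Ioi 0 ∩ s, f u := by
  rw [← integral_indicator (hs.preimage (by fun_prop)), ← setIntegral_indicator hs]
  exact integral_comp_sq_add_sq (s.indicator f)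

theorem setIntegral_annulus_comp_sq_add_sq (f : ℝ → ℝ) {δ : ℝ} (hδ : δ ≠ 0) :
    ∫ p in annulus δ, f (p.1 ^ 2 + p.2 ^ 2) = π * ∫ u in Icc (δ ^ 2) δ, f u := by
  have h_pos : Icc (δ ^ 2) δ ⊆ Ioi 0 := fun u hu => (by positivity : 0 < δ ^ 2).trans_le hu.1
  rw [← inter_eq_right.2 h_pos]
  exact setIntegral_preimage_sq_add_sq f measurableSet_Icc

theorem setIntegral_Icc_inv_sq {a b : ℝ} (ha : 0 < a) (hab : a ≤ b) :
    ∫ u in Icc a b, (u ^ 2)⁻¹ = a⁻¹ - b⁻¹ := by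
  have h_ne : ∀ u ∈ uIcc a b, u ≠ 0 := fun u hu => by
    rw [uIcc_of_le hab] at hu
    exact (ha.trans_le hu.1).ne'
  rw [integral_Icc_eq_integral_Ioc, ← intervalIntegral.integral_of_le hab,
    intervalIntegral.integral_eq_sub_of_hasDerivAt (f := fun u => -u⁻¹)
      (fun u hu => by simpa using (hasDerivAt_inv (h_ne u hu)).fun_neg)
      (ContinuousOn.intervalIntegrable (u := fun u => (u ^ 2)⁻¹)
        ((continuousOn_pow 2).inv₀ fun u hu => pow_ne_zero 2 (h_ne u hu)))]
  ring

theorem cutoff_eventuallyEq {δ : ℝ} (hL : log √δ ≠ 0) {p : ℝ × ℝ}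
    (hp : 0 < p.1 ^ 2 + p.2 ^ 2) :
    cutoff δ =ᶠ[𝓝 p] fun q => log (q.1 ^ 2 + q.2 ^ 2) * (2 * log √δ)⁻¹ - 1 := by
  have hδ : √δ ≠ 0 := fun h => hL (by rw [h, log_zero])
  filter_upwards [(isOpen_lt continuous_const (by fun_prop :
    Continuous fun q : ℝ × ℝ => q.1 ^ 2 + q.2 ^ 2)).mem_nhds hp] with q hq
  rw [cutoff, log_div (sqrt_pos.2 hq).ne' hδ, log_sqrt hq.le]
  field_simp

theorem cutoff_euler {δ : ℝ} (hL : log √δ ≠ 0) {p : ℝ × ℝ} (hp : 0 < p.1 ^ 2 + p.2 ^ 2) :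
    p.1 * fderiv ℝ (cutoff δ) p (1, 0) + p.2 * fderiv ℝ (cutoff δ) p (0, 1) = (log √δ)⁻¹ := by
  have h_sq : HasFDerivAt (𝕜 := ℝ) (fun q : ℝ × ℝ => q.1 ^ 2 + q.2 ^ 2) _ p :=
    (hasFDerivAt_fst.pow 2).add (hasFDerivAt_snd.pow 2)
  have h := ((h_sq.log hp.ne').mul_const (2 * log √δ)⁻¹).sub_const 1
  rw [(cutoff_eventuallyEq hL hp).fderiv_eq, h.fderiv]
  simp only [mul_inv_rev, Nat.add_one_sub_one, pow_one, nsmul_eq_mul, Nat.cast_ofNat, smul_add,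
    add_apply, smul_apply, ContinuousLinearMap.coe_fst',
    ContinuousLinearMap.coe_snd', smul_eq_mul, mul_one, mul_zero, add_zero, zero_add]
  field_simp

theorem error_density_le {δ u : ℝ} (L : ℝ) (hδ : 0 < δ) (hu : δ ^ 2 ≤ u) :
    (L⁻¹ * δ ^ 2 / (2 * u)) ^ 2 * (1 + δ ^ 4 / (4 * u ^ 2)) ≤
      5 / 16 * δ ^ 4 / L ^ 2 * (u ^ 2)⁻¹ := by
  have hu0 : 0 < u := (pow_pos hδ 2).trans_le hu
  have h_quarter : δ ^ 4 / (4 * u ^ 2) ≤ 1 / 4 := by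
    rw [div_le_div_iff₀ (by positivity) four_pos]
    nlinarith
  calc (L⁻¹ * δ ^ 2 / (2 * u)) ^ 2 * (1 + δ ^ 4 / (4 * u ^ 2))
      ≤ (L⁻¹ * δ ^ 2 / (2 * u)) ^ 2 * (5 / 4) := by gcongr; linarith
    _ = 5 / 16 * δ ^ 4 / L ^ 2 * (u ^ 2)⁻¹ := by field_simp; ring

theorem setIntegral_error_density_le (L : ℝ) {δ : ℝ} (hδ : 0 < δ) (hδ1 : δ ≤ 1) :
    ∫ u in Icc (δ ^ 2) δ, (L⁻¹ * δ ^ 2 / (2 * u)) ^ 2 * (1 + δ ^ 4 / (4 * u ^ 2)) ≤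
      5 / 16 * δ ^ 2 / L ^ 2 := by
  have h_pos : ∀ u ∈ Icc (δ ^ 2) δ, 0 < u := fun u hu => (pow_pos hδ 2).trans_le hu.1
  calc _ ≤ ∫ u in Icc (δ ^ 2) δ, 5 / 16 * δ ^ 4 / L ^ 2 * (u ^ 2)⁻¹ := by
        refine integral_mono_of_nonneg ?_ ?_ ?_
        · exact ae_restrict_of_forall_mem measurableSet_Icc fun u _ => by positivity
        · exact (continuousOn_const.mul ((continuousOn_pow 2).inv₀ fun u hu =>
            pow_ne_zero 2 (h_pos u hu).ne')).integrableOn_Icc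
        · exact ae_restrict_of_forall_mem measurableSet_Icc fun u hu => error_density_le L hδ hu.1
    _ = 5 / 16 * δ ^ 4 / L ^ 2 * ((δ ^ 2)⁻¹ - δ⁻¹) := by
        rw [integral_const_mul, setIntegral_Icc_inv_sq (pow_pos hδ 2) (by nlinarith)]
    _ ≤ 5 / 16 * δ ^ 4 / L ^ 2 * (δ ^ 2)⁻¹ := by
        gcongr
        exact sub_le_self _ (inv_pos.2 hδ).le
    _ = 5 / 16 * δ ^ 2 / L ^ 2 := by field_simp

/-- Error decay for the approximate special Lagrangian: there is C,
independent of δ ∈ (0,1), with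
∫_{A_δ} ((x β_x + y β_y)·δ²/(2(x²+y²)))² · (1 + δ⁴/(4(x²+y²)²)) dx dy
≤ C·δ²/(log√δ)². -/
theorem stmt_9 :
    ∃ C > (0 : ℝ), ∀ δ : ℝ, 0 < δ → δ < 1 →
      (∫ p in annulus δ,
        ((p.1 * fderiv ℝ (cutoff δ) p (1, 0) + p.2 * fderiv ℝ (cutoff δ) p (0, 1))
              * δ ^ 2 / (2 * (p.1 ^ 2 + p.2 ^ 2))) ^ 2
          * (1 + δ ^ 4 / (4 * (p.1 ^ 2 + p.2 ^ 2) ^ 2)))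
        ≤ C * δ ^ 2 / (Real.log (Real.sqrt δ)) ^ 2 := by
  refine ⟨5 * π / 16, by positivity, fun δ hδ hδ1 => ?_⟩
  have hL : log √δ ≠ 0 := (log_neg (sqrt_pos.2 hδ) (by simpa using sqrt_lt_sqrt hδ.le hδ1)).ne
  set G : ℝ → ℝ := fun u => ((log √δ)⁻¹ * δ ^ 2 / (2 * u)) ^ 2 * (1 + δ ^ 4 / (4 * u ^ 2))
  calc _ = ∫ p in annulus δ, G (p.1 ^ 2 + p.2 ^ 2) :=
        setIntegral_congr_fun (measurableSet_Icc.preimage (by fun_prop)) fun p hp => by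
          rw [cutoff_euler hL ((pow_pos hδ 2).trans_le hp.1)]
    _ = π * ∫ u in Icc (δ ^ 2) δ, G u := setIntegral_annulus_comp_sq_add_sq G hδ.ne'
    _ ≤ π * (5 / 16 * δ ^ 2 / (log √δ) ^ 2) :=
        mul_le_mul_of_nonneg_left (setIntegral_error_density_le _ hδ hδ1.le) pi_pos.le
    _ = 5 * π / 16 * δ ^ 2 / (log √δ) ^ 2 := by ring
end

section
/- Poincaré inequality for n ≥ 3 from the Michael–Simon inequality: assume for all nonnegative g ∈ C¹_c(N), (∫ g^{n/(n-1)})^{(n-1)/n} ≤ c ∫(|∇g| + g|H|) with ‖H‖_{L^n(N)} ≤ C₁ and c·C₁ < 1. Then for all nonnegative h ∈ C¹_c(N), ((1 − c·C₁)/C)·‖h‖_{L²} ≤ ‖∇h‖_{L^{2n/(n+2)}}, where C depends only on n and c. In particular, since vol(N) is finite, ‖h‖_{L²} ≤ C'·‖∇h‖_{L²}. -/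
/-!
Put `X = ∫ h²`. Since `g = h^((2n-2)/n)` satisfies `g^(n/(n-1)) = h²`, the Michael–Simon
inequality bounds `X^((n-1)/n)` by `c` times `∫ |∇g| + ∫ g |H|`. Hölder's inequality with the
exponents `(2n/(n+2), 2n/(n-2))` bounds the gradient term by
`(2n-2)/n · ‖∇h‖_{2n/(n+2)} · X^((n-2)/(2n))`, and with `(n/(n-1), n)` it bounds the curvature
term by `X^((n-1)/n) · C₁`. As `c C₁ < 1`, the curvature term is absorbed into the left-hand
side, and dividing by `X^((n-2)/(2n)) = X^((n-1)/n - 1/2)` gives the first inequality. The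
second one follows from `‖∇h‖_{2n/(n+2)} ≤ vol(N)^(1/n) ‖∇h‖₂`, Hölder against the constant `1`.
-/

open MeasureTheory Real

section Holder

variable {α : Type*} [MeasurableSpace α] {μ : Measure α}

lemma memLp_ofReal_of_integrable_rpow {f : α → ℝ} {p : ℝ} (hp : 0 < p) (hf0 : ∀ a, 0 ≤ f a)
    (hf : AEMeasurable f μ) (hfp : Integrable (fun a => f a ^ p) μ) :
    MemLp f (ENNReal.ofReal p) μ := by
  rw [← integrable_norm_rpow_iff hf.aestronglyMeasurable (by simpa using hp)
    ENNReal.ofReal_ne_top, ENNReal.toReal_ofReal hp.le]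
  simpa only [norm_of_nonneg (hf0 _)] using hfp

lemma integral_mul_le_of_integrable_rpow {p q : ℝ} (hpq : p.HolderConjugate q) {f g : α → ℝ}
    (hf0 : ∀ a, 0 ≤ f a) (hg0 : ∀ a, 0 ≤ g a) (hf : AEMeasurable f μ) (hg : AEMeasurable g μ)
    (hfp : Integrable (fun a => f a ^ p) μ) (hgq : Integrable (fun a => g a ^ q) μ) :
    ∫ a, f a * g a ∂μ ≤ (∫ a, f a ^ p ∂μ) ^ (1 / p) * (∫ a, g a ^ q ∂μ) ^ (1 / q) :=
  integral_mul_le_Lp_mul_Lq_of_nonneg hpq (.of_forall hf0) (.of_forall hg0)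
    (memLp_ofReal_of_integrable_rpow hpq.pos hf0 hf hfp)
    (memLp_ofReal_of_integrable_rpow hpq.symm.pos hg0 hg hgq)

lemma integral_rpow_mul_le_L2_mul_Lq {θ q : ℝ} (hθ : 0 < θ) (hq : 0 < q)
    (hθq : θ / 2 + 1 / q = 1) {f g : α → ℝ} (hf0 : ∀ a, 0 ≤ f a) (hg0 : ∀ a, 0 ≤ g a)
    (hf : AEMeasurable f μ) (hg : AEMeasurable g μ) (hf2 : Integrable (fun a => f a ^ 2) μ)
    (hgq : Integrable (fun a => g a ^ q) μ) :
    ∫ a, f a ^ θ * g a ∂μ ≤ (∫ a, f a ^ 2 ∂μ) ^ (θ / 2) * (∫ a, g a ^ q ∂μ) ^ (1 / q) := by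
  have hpq : (2 / θ).HolderConjugate q := by
    simpa using HolderConjugate.inv_inv (by positivity) (by positivity) hθq
  have hpow : (fun a => (f a ^ θ) ^ (2 / θ)) = fun a => f a ^ 2 := by
    ext a
    rw [← rpow_mul (hf0 a), mul_div_cancel₀ _ hθ.ne', rpow_two]
  have := integral_mul_le_of_integrable_rpow hpq (fun a => rpow_nonneg (hf0 a) θ) hg0
    (hf.pow_const θ) hg (by rwa [hpow]) hgq
  rwa [hpow, one_div_div] at this

variable [IsFiniteMeasure μ]

lemma rpow_integral_rpow_le_measure_univ_mul {p q : ℝ} (hp : 0 < p) (hpq : p < q) {f : α → ℝ}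
    (hf0 : ∀ a, 0 ≤ f a) (hf : AEMeasurable f μ) (hfq : Integrable (fun a => f a ^ q) μ) :
    (∫ a, f a ^ p ∂μ) ^ (1 / p)
      ≤ μ.real Set.univ ^ (1 / p - 1 / q) * (∫ a, f a ^ q ∂μ) ^ (1 / q) := by
  have hq : 0 < q := hp.trans hpq
  have hconj : (q / p).HolderConjugate (q / (q - p)) := by
    rw [holderConjugate_iff]
    exact ⟨(one_lt_div hp).2 hpq, by field_simp; ring⟩
  have hpow : (fun a => (f a ^ p) ^ (q / p)) = fun a => f a ^ q := by
    ext a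
    rw [← rpow_mul (hf0 a), mul_div_cancel₀ _ hp.ne']
  have hHolder := integral_mul_le_of_integrable_rpow hconj (fun a => rpow_nonneg (hf0 a) p)
    (fun _ => zero_le_one) (hf.pow_const p) aemeasurable_const (by rwa [hpow])
    (by simp)
  simp only [mul_one, one_rpow, integral_const, smul_eq_mul, hpow, one_div_div] at hHolder
  have hV : 0 ≤ μ.real Set.univ := measureReal_nonneg
  have hIq : 0 ≤ ∫ a, f a ^ q ∂μ := integral_nonneg fun a => rpow_nonneg (hf0 a) q
  calc (∫ a, f a ^ p ∂μ) ^ (1 / p)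
      ≤ ((∫ a, f a ^ q ∂μ) ^ (p / q) * μ.real Set.univ ^ ((q - p) / q)) ^ (1 / p) :=
        rpow_le_rpow (integral_nonneg fun a => rpow_nonneg (hf0 a) p) hHolder (by positivity)
    _ = μ.real Set.univ ^ (1 / p - 1 / q) * (∫ a, f a ^ q ∂μ) ^ (1 / q) := by
        rw [mul_rpow (by positivity) (by positivity), ← rpow_mul hIq, ← rpow_mul hV, mul_comm]
        congr 2 <;> field_simp

end Holder

lemma mul_rpow_le_of_mul_rpow_add_le {x a b L K : ℝ} (hx : 0 ≤ x) (ha : a ≠ 0) (hK : 0 ≤ K)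
    (h : L * x ^ (a + b) ≤ K * x ^ b) : L * x ^ a ≤ K := by
  rcases hx.eq_or_lt with rfl | hx
  · simpa [zero_rpow ha] using hK
  · rw [rpow_add hx, ← mul_assoc] at h
    exact le_of_mul_le_mul_right h (rpow_pos_of_pos hx b)

section MichaelSimon

variable {α : Type*} [MeasurableSpace α] {μ : Measure α}

lemma integral_michaelSimon_integrand_le {n C₁ : ℝ} (hn : 2 < n) {h gradh H : α → ℝ}
    (hh0 : ∀ a, 0 ≤ h a) (hg0 : ∀ a, 0 ≤ gradh a)
    (hh : AEMeasurable h μ) (hg : AEMeasurable gradh μ) (hH : AEMeasurable H μ)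
    (hh2 : Integrable (fun a => h a ^ 2) μ)
    (hgp : Integrable (fun a => gradh a ^ (2 * n / (n + 2))) μ)
    (hHn : Integrable (fun a => |H a| ^ n) μ)
    (hsum : Integrable (fun a => (2 * n - 2) / n * h a ^ ((n - 2) / n) * gradh a
      + h a ^ ((2 * n - 2) / n) * |H a|) μ)
    (hHC₁ : (∫ a, |H a| ^ n ∂μ) ^ (1 / n) ≤ C₁) :
    ∫ a, ((2 * n - 2) / n * h a ^ ((n - 2) / n) * gradh a + h a ^ ((2 * n - 2) / n) * |H a|) ∂μ
      ≤ (2 * n - 2) / n * ((∫ a, h a ^ 2 ∂μ) ^ ((n - 2) / n / 2)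
          * (∫ a, gradh a ^ (2 * n / (n + 2)) ∂μ) ^ ((n + 2) / (2 * n)))
        + (∫ a, h a ^ 2 ∂μ) ^ ((n - 1) / n) * C₁ := by
  have hn0 : 0 < n := by linarith
  have hk : 0 ≤ (2 * n - 2) / n := div_nonneg (by linarith) hn0.le
  have hgrad := integral_rpow_mul_le_L2_mul_Lq (θ := (n - 2) / n) (q := 2 * n / (n + 2))
    (div_pos (by linarith) hn0) (by positivity) (by field_simp; ring) hh0 hg0 hh hg hh2 hgp
  have hcurv := integral_rpow_mul_le_L2_mul_Lq (θ := (2 * n - 2) / n) (q := n)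
    (div_pos (by linarith) hn0) hn0 (by field_simp; ring) hh0 (fun a => abs_nonneg (H a)) hh
    hH.abs hh2 hHn
  rw [one_div_div] at hgrad
  rw [show (2 * n - 2) / n / 2 = (n - 1) / n by field_simp] at hcurv
  have hgrad0 : ∀ a, 0 ≤ (2 * n - 2) / n * h a ^ ((n - 2) / n) * gradh a := fun a =>
    mul_nonneg (mul_nonneg hk (rpow_nonneg (hh0 a) _)) (hg0 a)
  have hcurv0 : ∀ a, 0 ≤ h a ^ ((2 * n - 2) / n) * |H a| := fun a =>
    mul_nonneg (rpow_nonneg (hh0 a) _) (abs_nonneg _)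
  rw [integral_add
    (hsum.mono' (by fun_prop) (.of_forall fun a => by
      rw [norm_of_nonneg (hgrad0 a)]; linarith [hcurv0 a]))
    (hsum.mono' (by fun_prop) (.of_forall fun a => by
      rw [norm_of_nonneg (hcurv0 a)]; linarith [hgrad0 a]))]
  simp only [mul_assoc, integral_const_mul]
  exact add_le_add (mul_le_mul_of_nonneg_left hgrad hk)
    (hcurv.trans (mul_le_mul_of_nonneg_left hHC₁ (rpow_nonneg (integral_nonneg fun a =>
      sq_nonneg _) _)))

theorem mul_sqrt_integral_sq_le_of_michaelSimon {n c C₁ : ℝ} (hn : 2 < n) (hc : 0 ≤ c)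
    {h gradh H : α → ℝ} (hh0 : ∀ a, 0 ≤ h a) (hg0 : ∀ a, 0 ≤ gradh a)
    (hh : AEMeasurable h μ) (hg : AEMeasurable gradh μ) (hH : AEMeasurable H μ)
    (hh2 : Integrable (fun a => h a ^ 2) μ)
    (hgp : Integrable (fun a => gradh a ^ (2 * n / (n + 2))) μ)
    (hHn : Integrable (fun a => |H a| ^ n) μ)
    (hsum : Integrable (fun a => (2 * n - 2) / n * h a ^ ((n - 2) / n) * gradh a
      + h a ^ ((2 * n - 2) / n) * |H a|) μ)
    (hMS : (∫ a, (h a ^ ((2 * n - 2) / n)) ^ (n / (n - 1)) ∂μ) ^ ((n - 1) / n)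
      ≤ c * ∫ a, ((2 * n - 2) / n * h a ^ ((n - 2) / n) * gradh a
          + h a ^ ((2 * n - 2) / n) * |H a|) ∂μ)
    (hHC₁ : (∫ a, |H a| ^ n ∂μ) ^ (1 / n) ≤ C₁) :
    (1 - c * C₁) * (∫ a, h a ^ 2 ∂μ) ^ ((1 : ℝ) / 2)
      ≤ c * ((2 * n - 2) / n) * (∫ a, gradh a ^ (2 * n / (n + 2)) ∂μ) ^ ((n + 2) / (2 * n)) := by
  have hn0 : 0 < n := by linarith
  have hgp0 : 0 ≤ ∫ a, gradh a ^ (2 * n / (n + 2)) ∂μ :=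
    integral_nonneg fun a => rpow_nonneg (hg0 a) _
  have hX : 0 ≤ ∫ a, h a ^ 2 ∂μ := integral_nonneg fun a => sq_nonneg _
  have hsq : ∫ a, (h a ^ ((2 * n - 2) / n)) ^ (n / (n - 1)) ∂μ = ∫ a, h a ^ 2 ∂μ := by
    congr 1 with a
    rw [← rpow_mul (hh0 a), show (2 * n - 2) / n * (n / (n - 1)) = 2 by
      field_simp [show n - 1 ≠ 0 by linarith], rpow_two]
  have hbound := (hsq ▸ hMS).trans (mul_le_mul_of_nonneg_left
    (integral_michaelSimon_integrand_le hn hh0 hg0 hh hg hH hh2 hgp hHn hsum hHC₁) hc)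
  rw [show (n - 1) / n = 1 / 2 + (n - 2) / n / 2 by field_simp; ring] at hbound
  have hk : 0 ≤ c * ((2 * n - 2) / n) := mul_nonneg hc (div_nonneg (by linarith) hn0.le)
  refine mul_rpow_le_of_mul_rpow_add_le hX (by norm_num)
    (mul_nonneg hk (rpow_nonneg hgp0 _)) (b := (n - 2) / n / 2) ?_
  linarith

end MichaelSimon

theorem stmt_11_general {α : Type*} [MeasurableSpace α] (μ : Measure α) [IsFiniteMeasure μ]
    (n : ℕ) (hn : 3 ≤ n) (c C₁ : ℝ) (hc : 0 < c) (hsmall : c * C₁ < 1) :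
    ∃ C > (0 : ℝ), ∃ C' > (0 : ℝ), ∀ h gradh H : α → ℝ,
      (∀ a, 0 ≤ h a) → (∀ a, 0 ≤ gradh a) →
      AEMeasurable h μ → AEMeasurable gradh μ → AEMeasurable H μ →
      Integrable (fun a => (h a) ^ 2) μ →
      Integrable (fun a => (gradh a) ^ 2) μ →
      Integrable (fun a => (gradh a) ^ ((2 * (n : ℝ)) / ((n : ℝ) + 2))) μ →
      Integrable (fun a => |H a| ^ (n : ℝ)) μ →
      Integrable (fun a => ((2 * (n : ℝ) - 2) / n) * h a ^ (((n : ℝ) - 2) / n) * gradh a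
          + h a ^ ((2 * (n : ℝ) - 2) / n) * |H a|) μ →
      -- the Michael–Simon Sobolev inequality applied to g = h^{(2n−2)/n}:
      (∫ a, (h a ^ ((2 * (n : ℝ) - 2) / n)) ^ ((n : ℝ) / ((n : ℝ) - 1)) ∂μ)
            ^ (((n : ℝ) - 1) / n)
        ≤ c * ∫ a, (((2 * (n : ℝ) - 2) / n) * h a ^ (((n : ℝ) - 2) / n) * gradh a
            + h a ^ ((2 * (n : ℝ) - 2) / n) * |H a|) ∂μ →
      (∫ a, |H a| ^ (n : ℝ) ∂μ) ^ (1 / (n : ℝ)) ≤ C₁ →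
      ((1 - c * C₁) / C) * (∫ a, (h a) ^ 2 ∂μ) ^ ((1 : ℝ) / 2)
          ≤ (∫ a, (gradh a) ^ ((2 * (n : ℝ)) / ((n : ℝ) + 2)) ∂μ)
              ^ (((n : ℝ) + 2) / (2 * n))
        ∧ (∫ a, (h a) ^ 2 ∂μ) ^ ((1 : ℝ) / 2)
          ≤ C' * (∫ a, (gradh a) ^ 2 ∂μ) ^ ((1 : ℝ) / 2) := by
  have hn' : (2 : ℝ) < n := by exact_mod_cast hn
  have hgap : 0 < 1 - c * C₁ := by linarith
  set K := c * ((2 * (n : ℝ) - 2) / n) with hKdef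
  have hK : 0 < K := mul_pos hc (div_pos (by linarith) (by linarith))
  refine ⟨K, hK, K / (1 - c * C₁) * μ.real Set.univ ^ (1 / (n : ℝ)) + 1, by positivity, ?_⟩
  intro h gradh H hh0 hg0 hh hg hH hh2 hg2 hgp hHn hsum hMS hHC₁
  have hL2 := mul_sqrt_integral_sq_le_of_michaelSimon hn' hc.le hh0 hg0 hh hg hH hh2 hgp hHn
    hsum hMS hHC₁
  rw [← hKdef] at hL2
  have hLp := rpow_integral_rpow_le_measure_univ_mul (μ := μ) (p := 2 * n / (n + 2)) (q := 2)
    (by positivity) (by rw [div_lt_iff₀ (by positivity)]; linarith) hg0 hg (by simpa using hg2)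
  rw [one_div_div, show ((n : ℝ) + 2) / (2 * n) - 1 / 2 = 1 / n by field_simp; ring] at hLp
  simp only [rpow_two] at hLp
  have hE : 0 ≤ (∫ a, gradh a ^ 2 ∂μ) ^ ((1 : ℝ) / 2) :=
    rpow_nonneg (integral_nonneg fun a => sq_nonneg _) _
  refine ⟨by rw [div_mul_eq_mul_div, div_le_iff₀ hK]; linarith, ?_⟩
  calc (∫ a, h a ^ 2 ∂μ) ^ ((1 : ℝ) / 2)
      ≤ K * (μ.real Set.univ ^ (1 / (n : ℝ)) * (∫ a, gradh a ^ 2 ∂μ) ^ ((1 : ℝ) / 2))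
          / (1 - c * C₁) := by
        rw [le_div_iff₀ hgap]
        linarith [mul_le_mul_of_nonneg_left hLp hK.le]
    _ = K / (1 - c * C₁) * μ.real Set.univ ^ (1 / (n : ℝ))
          * (∫ a, gradh a ^ 2 ∂μ) ^ ((1 : ℝ) / 2) := by ring
    _ ≤ _ := by rw [add_mul, one_mul]; exact le_add_of_nonneg_right hE

/-- Poincaré inequality for n ≥ 3 from the Michael–Simon inequality.
`N` is abstracted as a finite measure space; `h ≥ 0` is a C¹_c function with gradient
norm `gradh = |∇h|` and mean curvature `H`. The Michael–Simon inequality is assumed for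
g = h^{(2n−2)/n}, whose gradient norm is ((2n−2)/n)·h^{(n−2)/n}·gradh by the chain rule.
Assuming ‖H‖_{L^n} ≤ C₁ and c·C₁ < 1, there are constants C (depending only on n and c)
and C' with ((1 − c·C₁)/C)·‖h‖_{L²} ≤ ‖∇h‖_{L^{2n/(n+2)}} and ‖h‖_{L²} ≤ C'·‖∇h‖_{L²}. -/
theorem stmt_11 {α : Type*} [MeasurableSpace α] (μ : Measure α) [IsFiniteMeasure μ]
    (n : ℕ) (hn : 3 ≤ n) (c C₁ : ℝ) (hc : 0 < c) (hC₁ : 0 ≤ C₁) (hsmall : c * C₁ < 1) :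
    ∃ C > (0 : ℝ), ∃ C' > (0 : ℝ), ∀ h gradh H : α → ℝ,
      (∀ a, 0 ≤ h a) → (∀ a, 0 ≤ gradh a) →
      AEMeasurable h μ → AEMeasurable gradh μ → AEMeasurable H μ →
      Integrable (fun a => (h a) ^ 2) μ →
      Integrable (fun a => (gradh a) ^ 2) μ →
      Integrable (fun a => (gradh a) ^ ((2 * (n : ℝ)) / ((n : ℝ) + 2))) μ →
      Integrable (fun a => |H a| ^ (n : ℝ)) μ →
      Integrable (fun a => ((2 * (n : ℝ) - 2) / n) * h a ^ (((n : ℝ) - 2) / n) * gradh a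
          + h a ^ ((2 * (n : ℝ) - 2) / n) * |H a|) μ →
      -- the Michael–Simon Sobolev inequality applied to g = h^{(2n−2)/n}:
      (∫ a, (h a ^ ((2 * (n : ℝ) - 2) / n)) ^ ((n : ℝ) / ((n : ℝ) - 1)) ∂μ)
            ^ (((n : ℝ) - 1) / n)
        ≤ c * ∫ a, (((2 * (n : ℝ) - 2) / n) * h a ^ (((n : ℝ) - 2) / n) * gradh a
            + h a ^ ((2 * (n : ℝ) - 2) / n) * |H a|) ∂μ →
      (∫ a, |H a| ^ (n : ℝ) ∂μ) ^ (1 / (n : ℝ)) ≤ C₁ →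
      ((1 - c * C₁) / C) * (∫ a, (h a) ^ 2 ∂μ) ^ ((1 : ℝ) / 2)
          ≤ (∫ a, (gradh a) ^ ((2 * (n : ℝ)) / ((n : ℝ) + 2)) ∂μ)
              ^ (((n : ℝ) + 2) / (2 * n))
        ∧ (∫ a, (h a) ^ 2 ∂μ) ^ ((1 : ℝ) / 2)
          ≤ C' * (∫ a, (gradh a) ^ 2 ∂μ) ^ ((1 : ℝ) / 2) :=
  stmt_11_general μ n hn c C₁ hc hsmall
end

section
/- Quantitative contraction/implicit function theorem in Banach spaces: let F : X → Y be a smooth map between Banach spaces with F(x) = F(0) + DF(0)x + N(x), let G : Y → X be a right inverse of DF(0) (DF(0)∘G = id), and suppose there is C > 0 with ‖G N(x) − G N(y)‖ ≤ C(‖x‖+‖y‖)‖x−y‖ for all x, y in the ball B_ε(0) with ε = 1/(8C). If ‖G F(0)‖ ≤ ε/2, then there exists a unique x₀ ∈ B_ε(0) with G F(0) + x₀ + G N(x₀) = 0 (hence F(x₀) = 0 if G is injective onto the relevant subspace), and ‖x₀‖ ≤ 2‖G F(0)‖. -/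
/-!
Solving `a + x + g x = 0` is finding a fixed point of `W x = -(a + g x)`. Since `g 0 = 0`, the
quadratic estimate gives `‖g x‖ ≤ C ‖x‖²` and makes `g` Lipschitz with constant `2 C r` on the
ball of radius `r`; when `C r < 1/2` and `‖a‖ ≤ r/2`, `W` is therefore a contraction of that
closed ball, and Banach's fixed point theorem applies. The bound `‖x‖ ≤ 2 ‖a‖` comes from
`‖x‖ ≤ ‖a‖ + C r ‖x‖` at the fixed point.
-/

open Metric Set Function
open scoped NNReal

theorem LipschitzOnWith.exists_isFixedPt {α : Type*} [MetricSpace α] {f : α → α} {s : Set α}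
    {K : ℝ≥0} (hf : LipschitzOnWith K f s) (hK : K < 1) (hs : IsComplete s) (hfs : MapsTo f s s)
    (hne : s.Nonempty) : ∃ x ∈ s, IsFixedPt f x := by
  obtain ⟨x, hx⟩ := hne
  obtain ⟨y, hy, hfy, -⟩ :=
    ContractingWith.exists_fixedPoint' hs hfs ⟨hK, hf.mapsToRestrict hfs⟩ hx (edist_ne_top _ _)
  exact ⟨y, hy, hfy⟩

theorem LipschitzOnWith.eq_of_isFixedPt {α : Type*} [MetricSpace α] {f : α → α} {s : Set α}
    {K : ℝ≥0} (hf : LipschitzOnWith K f s) (hK : K < 1) {x y : α} (hx : x ∈ s) (hy : y ∈ s)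
    (hfx : IsFixedPt f x) (hfy : IsFixedPt f y) : x = y := by
  have h := hf.dist_le_mul x hx y hy
  rw [hfx, hfy] at h
  have hK' : (K : ℝ) < 1 := hK
  exact dist_le_zero.mp (by nlinarith [dist_nonneg (x := x) (y := y)])

def QuadraticLipschitzOn {E F : Type*} [NormedAddCommGroup E] [NormedAddCommGroup F]
    (C : ℝ) (g : E → F) (s : Set E) : Prop :=
  ∀ x ∈ s, ∀ y ∈ s, ‖g x - g y‖ ≤ C * (‖x‖ + ‖y‖) * ‖x - y‖

namespace QuadraticLipschitzOn

variable {E F : Type*} [NormedAddCommGroup E] [NormedAddCommGroup F] {C r : ℝ}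

theorem norm_le_mul_sq {g : E → F} {s : Set E} (hg : QuadraticLipschitzOn C g s) (hg0 : g 0 = 0)
    (h0 : (0 : E) ∈ s) {x : E} (hx : x ∈ s) : ‖g x‖ ≤ C * ‖x‖ ^ 2 := by
  simpa [hg0, sq, mul_assoc] using hg x hx 0 h0

theorem lipschitzOnWith {g : E → F} (hg : QuadraticLipschitzOn C g (closedBall 0 r))
    (hC : 0 ≤ C) : LipschitzOnWith (2 * C * r).toNNReal g (closedBall 0 r) := by
  refine LipschitzOnWith.of_dist_le' fun x hx y hy => ?_
  rw [dist_eq_norm, dist_eq_norm]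
  calc ‖g x - g y‖ ≤ C * (‖x‖ + ‖y‖) * ‖x - y‖ := hg x hx y hy
    _ ≤ C * (r + r) * ‖x - y‖ := by
      gcongr
      exacts [mem_closedBall_zero_iff.mp hx, mem_closedBall_zero_iff.mp hy]
    _ = 2 * C * r * ‖x - y‖ := by ring

variable {g : E → E} {a : E}

theorem isFixedPt_neg_add_iff {x : E} : IsFixedPt (fun x => -(a + g x)) x ↔ a + x + g x = 0 := by
  rw [IsFixedPt, neg_eq_iff_add_eq_zero, add_right_comm]

theorem lipschitzOnWith_neg_add (hg : QuadraticLipschitzOn C g (closedBall 0 r)) (hC : 0 ≤ C) :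
    LipschitzOnWith (2 * C * r).toNNReal (fun x => -(a + g x)) (closedBall 0 r) :=
  LipschitzOnWith.of_dist_le_mul fun x hx y hy => by
    simpa only [dist_neg_neg, dist_add_left] using (hg.lipschitzOnWith hC).dist_le_mul x hx y hy

theorem mapsTo_neg_add (hg : QuadraticLipschitzOn C g (closedBall 0 r)) (hg0 : g 0 = 0)
    (hC : 0 ≤ C) (hCr : C * r ≤ 1 / 2) (ha : ‖a‖ ≤ r / 2) :
    MapsTo (fun x => -(a + g x)) (closedBall 0 r) (closedBall 0 r) := by
  intro x hx
  have hgx := hg.norm_le_mul_sq hg0 (mem_closedBall_self (dist_nonneg.trans hx)) hx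
  rw [mem_closedBall_zero_iff] at hx ⊢
  have hx0 := norm_nonneg x
  calc ‖-(a + g x)‖ ≤ ‖a‖ + ‖g x‖ := (norm_neg _).trans_le (norm_add_le _ _)
    _ ≤ r := by nlinarith [mul_le_mul_of_nonneg_left hx (mul_nonneg hC hx0)]

theorem norm_le_two_mul (hg : QuadraticLipschitzOn C g (closedBall 0 r)) (hg0 : g 0 = 0)
    (hC : 0 ≤ C) (hCr : C * r ≤ 1 / 2) {x : E} (hx : x ∈ closedBall 0 r)
    (hax : a + x + g x = 0) : ‖x‖ ≤ 2 * ‖a‖ := by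
  have hgx := hg.norm_le_mul_sq hg0 (mem_closedBall_self (dist_nonneg.trans hx)) hx
  have hfix : -(a + g x) = x := isFixedPt_neg_add_iff.mpr hax
  have hxa : ‖x‖ ≤ ‖a‖ + ‖g x‖ :=
    calc ‖x‖ = ‖-(a + g x)‖ := by rw [hfix]
      _ ≤ ‖a‖ + ‖g x‖ := (norm_neg _).trans_le (norm_add_le _ _)
  rw [mem_closedBall_zero_iff] at hx
  have hx0 := norm_nonneg x
  nlinarith [mul_le_mul_of_nonneg_left hx (mul_nonneg hC hx0)]

theorem exists_unique_add_add_eq_zero [CompleteSpace E]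
    (hg : QuadraticLipschitzOn C g (closedBall 0 r)) (hg0 : g 0 = 0) (hC : 0 ≤ C)
    (hCr : C * r < 1 / 2) (ha : ‖a‖ ≤ r / 2) :
    ∃ x ∈ closedBall 0 r, a + x + g x = 0 ∧ ‖x‖ ≤ 2 * ‖a‖ ∧
      ∀ y ∈ closedBall 0 r, a + y + g y = 0 → y = x := by
  have hr : 0 ≤ r := by linarith [norm_nonneg a]
  have hW := hg.lipschitzOnWith_neg_add (a := a) hC
  have hK : (2 * C * r).toNNReal < 1 := by rw [Real.toNNReal_lt_one]; linarith
  obtain ⟨x, hx, hfx⟩ := hW.exists_isFixedPt hK isClosed_closedBall.isComplete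
    (hg.mapsTo_neg_add hg0 hC hCr.le ha) ⟨0, mem_closedBall_self hr⟩
  have hax := isFixedPt_neg_add_iff.mp hfx
  exact ⟨x, hx, hax, hg.norm_le_two_mul hg0 hC hCr.le hx hax, fun y hy hay =>
    hW.eq_of_isFixedPt hK hy hx (isFixedPt_neg_add_iff.mpr hay) hfx⟩

end QuadraticLipschitzOn

theorem stmt_15_general {X Y : Type*}
    [NormedAddCommGroup X] [NormedSpace ℝ X] [CompleteSpace X]
    [NormedAddCommGroup Y] [NormedSpace ℝ Y]
    (F : X → Y) (D : X →L[ℝ] Y) (N : X → Y)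
    (hTaylor : ∀ x, F x = F 0 + D x + N x)
    (G : Y →L[ℝ] X)
    (C ε : ℝ) (hC : 0 < C) (hε : ε = 1 / (8 * C))
    (hN : ∀ x ∈ Metric.closedBall (0 : X) ε, ∀ y ∈ Metric.closedBall (0 : X) ε,
      ‖G (N x) - G (N y)‖ ≤ C * (‖x‖ + ‖y‖) * ‖x - y‖)
    (hF0 : ‖G (F 0)‖ ≤ ε / 2) :
    ∃ x₀ ∈ Metric.closedBall (0 : X) ε,
      G (F 0) + x₀ + G (N x₀) = 0 ∧ ‖x₀‖ ≤ 2 * ‖G (F 0)‖ ∧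
      ∀ x₁ ∈ Metric.closedBall (0 : X) ε,
        G (F 0) + x₁ + G (N x₁) = 0 → x₁ = x₀ := by
  have hN0 : N 0 = 0 := by simpa using hTaylor 0
  have hCε : C * ε = 1 / 8 := by rw [hε]; field_simp
  exact QuadraticLipschitzOn.exists_unique_add_add_eq_zero (g := fun x => G (N x)) hN
    (by simp [hN0]) hC.le (by linarith) hF0

/-- Quantitative contraction / implicit function theorem in Banach spaces.
Let F : X → Y be smooth with Taylor expansion F(x) = F(0) + DF(0)x + N(x), let G be a
right inverse of DF(0), and suppose ‖G N(x) − G N(y)‖ ≤ C(‖x‖+‖y‖)‖x−y‖ on the ball of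
radius ε = 1/(8C). If ‖G F(0)‖ ≤ ε/2, then there is a unique x₀ in that ball with
G F(0) + x₀ + G N(x₀) = 0, and ‖x₀‖ ≤ 2‖G F(0)‖. -/
theorem stmt_15 {X Y : Type*}
    [NormedAddCommGroup X] [NormedSpace ℝ X] [CompleteSpace X]
    [NormedAddCommGroup Y] [NormedSpace ℝ Y]
    (F : X → Y) (D : X →L[ℝ] Y) (N : X → Y)
    (hTaylor : ∀ x, F x = F 0 + D x + N x)
    (G : Y →L[ℝ] X) (hG : ∀ y, D (G y) = y)
    (C ε : ℝ) (hC : 0 < C) (hε : ε = 1 / (8 * C))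
    (hN : ∀ x ∈ Metric.closedBall (0 : X) ε, ∀ y ∈ Metric.closedBall (0 : X) ε,
      ‖G (N x) - G (N y)‖ ≤ C * (‖x‖ + ‖y‖) * ‖x - y‖)
    (hF0 : ‖G (F 0)‖ ≤ ε / 2) :
    ∃ x₀ ∈ Metric.closedBall (0 : X) ε,
      G (F 0) + x₀ + G (N x₀) = 0 ∧ ‖x₀‖ ≤ 2 * ‖G (F 0)‖ ∧
      ∀ x₁ ∈ Metric.closedBall (0 : X) ε,
        G (F 0) + x₁ + G (N x₁) = 0 → x₁ = x₀ :=
  stmt_15_general F D N hTaylor G C ε hC hε hN hF0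
end
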